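/- arXiv:0707.3852 — 2 statements merged into one kernel-verified Lean document; each statement's English description precedes it below -/
import Mathlib

section
/- Let M and N be d×d matrices such that M and M+N are diagonalizable. Then the eigenvalues of I_n ⊗ M + (E_n/n) ⊗ N (with multiplicity) are the eigenvalues of M, each with multiplicity n−1, together with the eigenvalues of M+N. -/
/-!
The averaging matrix `E_n / n` is a rank-one idempotent, hence similar to
`diag(1, 0, …, 0)`. Conjugating by the corresponding change of basis tensored with `I_d` turns
`I_n ⊗ M + (E_n / n) ⊗ N` into `I_n ⊗ M + diag(1, 0, …, 0) ⊗ N`, which after reordering the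
indices is block diagonal with blocks `M + N, M, …, M`.
-/

open Matrix Polynomial
open scoped Kronecker

namespace Matrix

variable {R : Type*} [CommRing R] {m n : Type*} [Fintype m] [DecidableEq m] [Fintype n]
  [DecidableEq n]

theorem charmatrix_blockDiagonal (f : n → Matrix m m R) :
    charmatrix (blockDiagonal f) = blockDiagonal fun i => charmatrix (f i) := by
  simp only [charmatrix, scalar_apply, RingHom.mapMatrix_apply]
  rw [blockDiagonal_map _ _ (map_zero C), ← blockDiagonal_diagonal fun _ _ => (X : R[X]),
    ← blockDiagonal_sub]
  rfl

theorem charpoly_blockDiagonal (f : n → Matrix m m R) :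
    (blockDiagonal f).charpoly = ∏ i, (f i).charpoly := by
  rw [charpoly, charmatrix_blockDiagonal, det_blockDiagonal]
  rfl

theorem charpoly_one_kronecker_add_diagonal_kronecker (M N : Matrix m m R) (c : n → R) :
    ((1 : Matrix n n R) ⊗ₖ M + diagonal c ⊗ₖ N).charpoly = ∏ i, (M + c i • N).charpoly := by
  rw [← diagonal_one, diagonal_kronecker, diagonal_kronecker,
    ← coe_reindexLinearEquiv R R, ← map_add, coe_reindexLinearEquiv, ← blockDiagonal_add,
    charpoly_reindex, charpoly_blockDiagonal]
  simp only [Pi.add_apply, one_smul]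

theorem charpoly_one_kronecker_add_conj_kronecker (U : (Matrix n n R)ˣ) (P : Matrix n n R)
    (M N : Matrix m m R) :
    ((1 : Matrix n n R) ⊗ₖ M + (U⁻¹ * P * U : Matrix n n R) ⊗ₖ N).charpoly
      = ((1 : Matrix n n R) ⊗ₖ M + P ⊗ₖ N).charpoly := by
  let V : (Matrix (n × m) (n × m) R)ˣ :=
    { val := (↑U⁻¹ : Matrix n n R) ⊗ₖ 1
      inv := (U : Matrix n n R) ⊗ₖ 1
      val_inv := by rw [← mul_kronecker_mul, U.inv_mul, Matrix.one_mul, one_kronecker_one]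
      inv_val := by rw [← mul_kronecker_mul, U.mul_inv, Matrix.one_mul, one_kronecker_one] }
  have hconj : (1 : Matrix n n R) ⊗ₖ M + (U⁻¹ * P * U : Matrix n n R) ⊗ₖ N
      = (V * ((1 : Matrix n n R) ⊗ₖ M + P ⊗ₖ N) * V⁻¹ : Matrix (n × m) (n × m) R) := by
    simp only [V, Units.inv_mk, Matrix.mul_add, Matrix.add_mul, ← mul_kronecker_mul,
      Matrix.mul_one, Matrix.one_mul, U.inv_mul]
  rw [hconj, coe_units_inv, charpoly_units_conj]

theorem exists_units_conj_inv_smul_ones_eq_diagonal_single {K : Type*} [Field K] (k : ℕ)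
    (hk : ((k + 1 : ℕ) : K) ≠ 0) :
    ∃ U : (Matrix (Fin (k + 1)) (Fin (k + 1)) K)ˣ,
      (↑U⁻¹ : Matrix (Fin (k + 1)) (Fin (k + 1)) K) *
          (((k + 1 : ℕ) : K)⁻¹ • of fun _ _ => 1) * (U : Matrix (Fin (k + 1)) (Fin (k + 1)) K)
        = diagonal (Pi.single 0 1) := by
  set c : K := ((k + 1 : ℕ) : K)⁻¹
  have hc : ((k : K) + 1) * c = 1 := by exact_mod_cast mul_inv_cancel₀ hk
  -- The columns of `Q` are the eigenvectors `𝟙` (eigenvalue 1) and `e_j - e_0` (eigenvalue 0).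
  let Q : Matrix (Fin (k + 1)) (Fin (k + 1)) K :=
    of fun i j => if j = 0 then 1 else if i = j then 1 else if i = 0 then -1 else 0
  let S : Matrix (Fin (k + 1)) (Fin (k + 1)) K :=
    of fun i j => if i = 0 then c else (if i = j then 1 else 0) - c
  have hSQ : S * Q = 1 := by
    ext i j
    cases i using Fin.cases <;> cases j using Fin.cases <;>
      simp [S, Q, mul_apply, Fin.sum_univ_succ, one_apply, eq_comm (a := (0 : Fin (k + 1))), hc]
  have hPQ : (c • of fun _ _ => 1) * Q = of fun _ j => if j = 0 then 1 else 0 := by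
    ext i j
    cases j using Fin.cases <;>
      simp [Q, mul_apply, Fin.sum_univ_succ, eq_comm (a := (0 : Fin (k + 1))), hc]
  refine ⟨⟨Q, S, mul_eq_one_comm.mp hSQ, hSQ⟩, ?_⟩
  change S * (c • of fun _ _ => 1) * Q = _
  ext i j
  rw [Matrix.mul_assoc, hPQ]
  cases i using Fin.cases <;> cases j using Fin.cases <;>
    simp [S, mul_apply, diagonal_apply, eq_comm (a := (0 : Fin (k + 1))), hc]

end Matrix

theorem eigenvalues_kronecker_perturbation_general (n d : ℕ) (hn : 1 ≤ n)
    (M N : Matrix (Fin d) (Fin d) ℂ) :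
    ((1 : Matrix (Fin n) (Fin n) ℂ) ⊗ₖ M
        + ((n : ℂ)⁻¹ • Matrix.of (fun _ _ : Fin n => (1 : ℂ))) ⊗ₖ N).charpoly
      = M.charpoly ^ (n - 1) * (M + N).charpoly := by
  obtain ⟨k, rfl⟩ : ∃ k, n = k + 1 := ⟨n - 1, by omega⟩
  obtain ⟨U, hU⟩ := exists_units_conj_inv_smul_ones_eq_diagonal_single (K := ℂ) k
    (Nat.cast_ne_zero.mpr k.succ_ne_zero)
  rw [← charpoly_one_kronecker_add_conj_kronecker U, hU,
    charpoly_one_kronecker_add_diagonal_kronecker, Fin.prod_univ_succ]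
  simp [Fin.succ_ne_zero, mul_comm]

/-- The eigenvalues of I_n ⊗ M + (E_n/n) ⊗ N, with multiplicity, are the eigenvalues of M
(each with multiplicity n-1) together with those of M+N, expressed via charpoly. -/
theorem eigenvalues_kronecker_perturbation (n d : ℕ) (hn : 1 ≤ n)
    (M N : Matrix (Fin d) (Fin d) ℂ)
    (hM : ∃ P : Matrix (Fin d) (Fin d) ℂ, IsUnit P.det ∧ (P⁻¹ * M * P).IsDiag)
    (hMN : ∃ P : Matrix (Fin d) (Fin d) ℂ, IsUnit P.det ∧ (P⁻¹ * (M + N) * P).IsDiag) :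
    ((1 : Matrix (Fin n) (Fin n) ℂ) ⊗ₖ M
        + ((n : ℂ)⁻¹ • Matrix.of (fun _ _ : Fin n => (1 : ℂ))) ⊗ₖ N).charpoly
      = M.charpoly ^ (n - 1) * (M + N).charpoly :=
  eigenvalues_kronecker_perturbation_general n d hn M N
end

section
/- Let X₁ = X̃₁ + X̂₁ where X̃₁ satisfies A'X̃₁ + X̃₁A − X̃₁ B R⁻¹ B' X̃₁ + Q = 0 and X₁ satisfies A'X₁ + X₁A − X₁ (B R⁻¹ B' − θW) X₁ + Q = 0. Then X_n = (1/n) I_n ⊗ X̃₁ + (1/n²) E_n ⊗ X̂₁ satisfies the generalized algebraic Riccati equation A_n' X + X A_n − X (n B_n R_n⁻¹ B_n' − θ W_n) X + (1/n) Q_n = 0, where A_n = I_n ⊗ A, B_n = I_n ⊗ B, R_n = I_n ⊗ R, Q_n = I_n ⊗ Q, W_n = E_n ⊗ W. -/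
/-!
With `E = E_n`, the relations `I E = E I = E` and `E² = n E` make the algebra spanned by `I ⊗ M`
and `E ⊗ M` closed under products, so the n-agent Riccati expression evaluated at
`X_n = n⁻¹ (I ⊗ X̃₁) + n⁻² (E ⊗ X̂₁)` splits as `n⁻¹ (I ⊗ Ric₀(X̃₁)) + n⁻² (E ⊗ (Ric_θ(X₁) - Ric₀(X̃₁)))`,
where `Ric₀` and `Ric_θ` are the one-agent LQG and risk-sensitive Riccati maps. Both vanish by
hypothesis.
-/

open Matrix
open scoped Kronecker

/-- The n×n matrix of ones. -/
def onesMatrix (n : ℕ) : Matrix (Fin n) (Fin n) ℝ := Matrix.of fun _ _ => 1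

namespace Matrix

theorem kronecker_sub {α l m n p : Type*} [NonUnitalNonAssocRing α] (A : Matrix l m α)
    (B₁ B₂ : Matrix n p α) : A ⊗ₖ (B₁ - B₂) = A ⊗ₖ B₁ - A ⊗ₖ B₂ :=
  ext fun _ _ => mul_sub _ _ _

variable {𝕜 ι n : Type*} [Field 𝕜] [Fintype ι] [DecidableEq ι]

theorem one_kronecker_mul_inv_mul_transpose {k : Type*} [Fintype k] [DecidableEq k]
    (B : Matrix n k 𝕜) (R : Matrix k k 𝕜) :
    ((1 : Matrix ι ι 𝕜) ⊗ₖ B) * ((1 : Matrix ι ι 𝕜) ⊗ₖ R)⁻¹ * ((1 : Matrix ι ι 𝕜) ⊗ₖ B)ᵀ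
      = (1 : Matrix ι ι 𝕜) ⊗ₖ (B * R⁻¹ * Bᵀ) := by
  rw [inv_kronecker, inv_one, ← kroneckerMap_transpose, transpose_one, ← mul_kronecker_mul,
    ← mul_kronecker_mul, Matrix.one_mul, Matrix.one_mul]

variable [Fintype n]

def riccati (A S Q X : Matrix n n 𝕜) : Matrix n n 𝕜 := Aᵀ * X + X * A - X * S * X + Q

theorem riccati_kronecker {J : Matrix ι ι 𝕜} {c : 𝕜} (hJ : J * J = c • J)
    (A S W Q X Y : Matrix n n 𝕜) (θ : 𝕜) :
    riccati (1 ⊗ₖ A) (c • (1 ⊗ₖ S) - θ • (J ⊗ₖ W)) (c⁻¹ • (1 ⊗ₖ Q))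
        (c⁻¹ • (1 ⊗ₖ X) + (c ^ 2)⁻¹ • (J ⊗ₖ Y))
      = c⁻¹ • (1 ⊗ₖ riccati A S Q X)
        + (c ^ 2)⁻¹ • (J ⊗ₖ (riccati A (S - θ • W) Q (X + Y) - riccati A S Q X)) := by
  rcases eq_or_ne c 0 with rfl | hc
  · simp [riccati]
  simp only [riccati, ← kroneckerMap_transpose, transpose_one, Matrix.mul_add, Matrix.add_mul,
    Matrix.mul_sub, Matrix.sub_mul, Matrix.smul_mul, Matrix.mul_smul, smul_smul, smul_add,
    smul_sub, kronecker_add, kronecker_sub, kronecker_smul, smul_kronecker, ← mul_kronecker_mul,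
    Matrix.one_mul, Matrix.mul_one, hJ]
  match_scalars <;> field_simp <;> ring

end Matrix

theorem onesMatrix_mul_self (n : ℕ) : onesMatrix n * onesMatrix n = (n : ℝ) • onesMatrix n := by
  ext i j
  simp [mul_apply, onesMatrix]

theorem gare_n_agents_general (n d k : ℕ)
    (A : Matrix (Fin d) (Fin d) ℝ) (B : Matrix (Fin d) (Fin k) ℝ)
    (R : Matrix (Fin k) (Fin k) ℝ) (Q W X₁tilde X₁hat : Matrix (Fin d) (Fin d) ℝ)
    (θ : ℝ)
    (htilde : Aᵀ * X₁tilde + X₁tilde * A - X₁tilde * (B * R⁻¹ * Bᵀ) * X₁tilde + Q = 0)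
    (hfull : Aᵀ * (X₁tilde + X₁hat) + (X₁tilde + X₁hat) * A
      - (X₁tilde + X₁hat) * (B * R⁻¹ * Bᵀ - θ • W) * (X₁tilde + X₁hat) + Q = 0) :
    ((1 : Matrix (Fin n) (Fin n) ℝ) ⊗ₖ A)ᵀ
        * ((n : ℝ)⁻¹ • ((1 : Matrix (Fin n) (Fin n) ℝ) ⊗ₖ X₁tilde)
          + ((n : ℝ)^2)⁻¹ • (onesMatrix n ⊗ₖ X₁hat))
      + ((n : ℝ)⁻¹ • ((1 : Matrix (Fin n) (Fin n) ℝ) ⊗ₖ X₁tilde)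
          + ((n : ℝ)^2)⁻¹ • (onesMatrix n ⊗ₖ X₁hat)) * ((1 : Matrix (Fin n) (Fin n) ℝ) ⊗ₖ A)
      - ((n : ℝ)⁻¹ • ((1 : Matrix (Fin n) (Fin n) ℝ) ⊗ₖ X₁tilde)
          + ((n : ℝ)^2)⁻¹ • (onesMatrix n ⊗ₖ X₁hat))
        * ((n : ℝ) • (((1 : Matrix (Fin n) (Fin n) ℝ) ⊗ₖ B)
              * ((1 : Matrix (Fin n) (Fin n) ℝ) ⊗ₖ R)⁻¹
              * ((1 : Matrix (Fin n) (Fin n) ℝ) ⊗ₖ B)ᵀ)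
            - θ • (onesMatrix n ⊗ₖ W))
        * ((n : ℝ)⁻¹ • ((1 : Matrix (Fin n) (Fin n) ℝ) ⊗ₖ X₁tilde)
          + ((n : ℝ)^2)⁻¹ • (onesMatrix n ⊗ₖ X₁hat))
      + (n : ℝ)⁻¹ • ((1 : Matrix (Fin n) (Fin n) ℝ) ⊗ₖ Q) = 0 := by
  rw [one_kronecker_mul_inv_mul_transpose]
  change riccati (1 ⊗ₖ A) _ _ _ = 0
  rw [riccati_kronecker (onesMatrix_mul_self n), show riccati A _ Q X₁tilde = 0 from htilde,
    show riccati A _ Q (X₁tilde + X₁hat) = 0 from hfull]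
  simp

/-- If X̃₁ solves the LQG Riccati equation and X₁ = X̃₁ + X̂₁ solves the risk-sensitive GARE for
one agent, then X_n = (1/n) I_n ⊗ X̃₁ + (1/n²) E_n ⊗ X̂₁ solves the n-agent GARE. -/
theorem gare_n_agents (n d k : ℕ)
    (A : Matrix (Fin d) (Fin d) ℝ) (B : Matrix (Fin d) (Fin k) ℝ)
    (R : Matrix (Fin k) (Fin k) ℝ) (Q W X₁tilde X₁hat : Matrix (Fin d) (Fin d) ℝ)
    (θ : ℝ) (hR : IsUnit R.det) (hWsym : Wᵀ = W)
    (htilde : Aᵀ * X₁tilde + X₁tilde * A - X₁tilde * (B * R⁻¹ * Bᵀ) * X₁tilde + Q = 0)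
    (hfull : Aᵀ * (X₁tilde + X₁hat) + (X₁tilde + X₁hat) * A
      - (X₁tilde + X₁hat) * (B * R⁻¹ * Bᵀ - θ • W) * (X₁tilde + X₁hat) + Q = 0) :
    ((1 : Matrix (Fin n) (Fin n) ℝ) ⊗ₖ A)ᵀ
        * ((n : ℝ)⁻¹ • ((1 : Matrix (Fin n) (Fin n) ℝ) ⊗ₖ X₁tilde)
          + ((n : ℝ)^2)⁻¹ • (onesMatrix n ⊗ₖ X₁hat))
      + ((n : ℝ)⁻¹ • ((1 : Matrix (Fin n) (Fin n) ℝ) ⊗ₖ X₁tilde)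
          + ((n : ℝ)^2)⁻¹ • (onesMatrix n ⊗ₖ X₁hat)) * ((1 : Matrix (Fin n) (Fin n) ℝ) ⊗ₖ A)
      - ((n : ℝ)⁻¹ • ((1 : Matrix (Fin n) (Fin n) ℝ) ⊗ₖ X₁tilde)
          + ((n : ℝ)^2)⁻¹ • (onesMatrix n ⊗ₖ X₁hat))
        * ((n : ℝ) • (((1 : Matrix (Fin n) (Fin n) ℝ) ⊗ₖ B)
              * ((1 : Matrix (Fin n) (Fin n) ℝ) ⊗ₖ R)⁻¹
              * ((1 : Matrix (Fin n) (Fin n) ℝ) ⊗ₖ B)ᵀ)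
            - θ • (onesMatrix n ⊗ₖ W))
        * ((n : ℝ)⁻¹ • ((1 : Matrix (Fin n) (Fin n) ℝ) ⊗ₖ X₁tilde)
          + ((n : ℝ)^2)⁻¹ • (onesMatrix n ⊗ₖ X₁hat))
      + (n : ℝ)⁻¹ • ((1 : Matrix (Fin n) (Fin n) ℝ) ⊗ₖ Q) = 0 :=
  gare_n_agents_general n d k A B R Q W X₁tilde X₁hat θ htilde hfull
end
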